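/- On the elliptic curve E : y^2 = x^3 - 409948 x^2 + 20578452576 x - 2360098139294192 over Q, the point P = (1054152, 857435524) is a rational point of order exactly 5. -/

import Mathlib

/-!
Since `Δ(E) ≠ 0`, every rational solution of the equation is a nonsingular point. Doubling with
the tangent-line formulas gives `2P = (409948, 77948684)` and `4P = (1054152, -857435524) = -P`,
so `5P = 0`; as `P ≠ 0` and `5` is prime, `P` has order exactly `5`.
-/

open WeierstrassCurve.Affine

/-- The elliptic curve `E : y² = x³ - 409948x² + 20578452576x - 2360098139294192` over `ℚ`. -/
noncomputable def E : WeierstrassCurve.Affine ℚ :=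
  { a₁ := 0, a₂ := -409948, a₃ := 0, a₄ := 20578452576, a₆ := -2360098139294192 }

namespace WeierstrassCurve.Affine.Point

variable {F : Type*} [Field F] [DecidableEq F] {W : WeierstrassCurve.Affine F}

theorem some_add_self_eq {x y x' y' : F} {h : W.Nonsingular x y} {h' : W.Nonsingular x' y'}
    (hy : y ≠ W.negY x y) (hx' : x' = W.addX x x (W.slope x x y y))
    (hy' : y' = W.addY x x y (W.slope x x y y)) :
    some _ _ h + some _ _ h = some _ _ h' := by
  subst hx' hy'
  exact add_self_of_Y_ne hy

end WeierstrassCurve.Affine.Point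

theorem E_Δ_ne_zero : E.Δ ≠ 0 := by
  norm_num [E, WeierstrassCurve.Δ, WeierstrassCurve.b₂, WeierstrassCurve.b₄,
    WeierstrassCurve.b₆, WeierstrassCurve.b₈]

theorem E_nonsingular {x y : ℚ}
    (h : y ^ 2 = x ^ 3 - 409948 * x ^ 2 + 20578452576 * x - 2360098139294192) :
    E.Nonsingular x y := by
  rw [← equation_iff_nonsingular_of_Δ_ne_zero E_Δ_ne_zero, equation_iff]
  simp only [E]
  linear_combination h

theorem nonsingular_P : E.Nonsingular 1054152 857435524 := E_nonsingular (by norm_num)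

theorem nonsingular_two_P : E.Nonsingular 409948 77948684 := E_nonsingular (by norm_num)

theorem nonsingular_four_P : E.Nonsingular 1054152 (-857435524) := E_nonsingular (by norm_num)

theorem P_add_P :
    Point.some _ _ nonsingular_P + Point.some _ _ nonsingular_P =
      Point.some _ _ nonsingular_two_P := by
  have hy : (857435524 : ℚ) ≠ E.negY 1054152 857435524 := by norm_num [negY, E]
  refine Point.some_add_self_eq hy ?_ ?_ <;>
    norm_num [slope_of_Y_ne rfl hy, addY, negAddY, addX, negY, E]

theorem two_P_add_two_P :
    Point.some _ _ nonsingular_two_P + Point.some _ _ nonsingular_two_P =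
      Point.some _ _ nonsingular_four_P := by
  have hy : (77948684 : ℚ) ≠ E.negY 409948 77948684 := by norm_num [negY, E]
  refine Point.some_add_self_eq hy ?_ ?_ <;>
    norm_num [slope_of_Y_ne rfl hy, addY, negAddY, addX, negY, E]

theorem four_P_add_P :
    Point.some _ _ nonsingular_four_P + Point.some _ _ nonsingular_P = 0 :=
  Point.add_of_Y_eq rfl (by norm_num [negY, E])

/-- The point `P = (1054152, 857435524)` is a rational point of order exactly `5` on `E`. -/
theorem P_has_order_five :
    ∃ h : E.Nonsingular 1054152 857435524, addOrderOf (Point.some _ _ h) = 5 := by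
  have : Fact (Nat.Prime 5) := ⟨by norm_num⟩
  refine ⟨nonsingular_P, addOrderOf_eq_prime ?_ (Point.some_ne_zero _)⟩
  rw [show 5 = 2 * 2 + 1 from rfl, succ_nsmul, mul_nsmul, two_nsmul (Point.some _ _ _), P_add_P,
    two_nsmul, two_P_add_two_P, four_P_add_P]
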